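/- Let p ∈ ℕ, let E = EuclideanSpace ℝ (Fin p), let L > 0, and let S : E → E be L-Lipschitz. Let t ∈ ℝ satisfy 0 ≤ t, t ≤ 1 and t ≤ 1/(12·L). Let γ_p denote the standard Gaussian measure on E, and let b : E → E be any measurable function. Then, writing a_t(a₀, z) := Real.exp t • a₀ + (2·(Real.exp t − 1)) • S a₀ + Real.sqrt (Real.exp t − 1) • z, the following inequality of Lebesgue integrals (with values in [0,∞]) holds: ∫∫ ‖S (a_t(a₀,z)) − S a₀‖² dγ_p(a₀) dγ_p(z) ≤ 36·p·L²·t·(1 + t) + 144·L²·t² · ∫∫ ( ‖S (a_t(a₀,z)) − b (a_t(a₀,z))‖² + ‖b (a_t(a₀,z))‖² ) dγ_p(a₀) dγ_p(z). -/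

import Mathlib

open MeasureTheory ProbabilityTheory

open Real Filter

lemma aux_tendsto_top : Tendsto (fun x : ℝ => x * rexp (-(2⁻¹ : ℝ) * x ^ 2)) atTop (nhds 0) := by
  have h := rpow_mul_exp_neg_mul_sq_isLittleO_exp_neg (b := 2⁻¹) (by norm_num) 1
  have h2 : Tendsto (fun x : ℝ => rexp (-(1/2) * x)) atTop (nhds 0) := by
    have := Real.tendsto_exp_atBot
    apply this.comp
    exact (tendsto_const_mul_atBot_of_neg (by norm_num)).2 tendsto_id
  have := h.isBigO.trans_tendsto h2
  refine this.congr' ?_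
  filter_upwards [] with x
  rw [rpow_one]

lemma aux_hasDeriv (x : ℝ) : HasDerivAt (fun x : ℝ => -x * rexp (-(2⁻¹:ℝ) * x ^ 2))
    ((x ^ 2 - 1) * rexp (-(2⁻¹:ℝ) * x ^ 2)) x := by
  have h1 : HasDerivAt (fun x : ℝ => -(2⁻¹:ℝ) * x ^ 2) (-(2⁻¹:ℝ) * (2 * x)) x := by
    simpa using (hasDerivAt_pow 2 x).const_mul (-(2⁻¹:ℝ))
  have h2 := h1.exp
  have h3 : HasDerivAt (fun x : ℝ => -x) (-1) x := (hasDerivAt_id x).neg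
  have := h3.mul h2
  refine this.congr_deriv ?_
  ring

lemma aux_integrable_sq : Integrable (fun x : ℝ => x ^ 2 * rexp (-(2⁻¹:ℝ) * x ^ 2)) := by
  have := integrable_rpow_mul_exp_neg_mul_sq (b := 2⁻¹) (by norm_num) (s := 2) (by norm_num)
  refine this.congr ?_
  filter_upwards [] with x
  rw [show ((2:ℝ)) = ((2:ℕ):ℝ) by norm_num, rpow_natCast]

lemma aux_second_moment : ∫ x : ℝ, x ^ 2 * rexp (-(2⁻¹:ℝ) * x ^ 2) = Real.sqrt (2 * π) := by
  have hint : Integrable (fun x : ℝ => (x ^ 2 - 1) * rexp (-(2⁻¹:ℝ) * x ^ 2)) := by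
    have h2 : Integrable (fun x : ℝ => rexp (-(2⁻¹:ℝ) * x ^ 2)) := integrable_exp_neg_mul_sq (by norm_num)
    refine (aux_integrable_sq.sub h2).congr ?_
    filter_upwards [] with x
    simp only [Pi.sub_apply]; ring
  have htop : Tendsto (fun x : ℝ => -x * rexp (-(2⁻¹:ℝ) * x ^ 2)) atTop (nhds 0) := by
    have := aux_tendsto_top.neg
    simp only [neg_zero] at this
    refine this.congr fun x => by ring
  have hbot : Tendsto (fun x : ℝ => -x * rexp (-(2⁻¹:ℝ) * x ^ 2)) atBot (nhds 0) := by
    have := aux_tendsto_top.comp tendsto_neg_atBot_atTop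
    simp only [Function.comp_def] at this
    refine this.congr fun x => ?_
    simp [neg_sq]
  have h0 : ∫ x : ℝ, (x ^ 2 - 1) * rexp (-(2⁻¹:ℝ) * x ^ 2) = 0 :=
    (integral_of_hasDerivAt_of_tendsto aux_hasDeriv hint hbot htop).trans (by ring)
  have h2 : Integrable (fun x : ℝ => rexp (-(2⁻¹:ℝ) * x ^ 2)) := integrable_exp_neg_mul_sq (by norm_num)
  have hsub := integral_sub aux_integrable_sq h2
  have hgauss : ∫ x : ℝ, rexp (-(2⁻¹:ℝ) * x ^ 2) = Real.sqrt (2 * π) := by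
    rw [integral_gaussian]
    norm_num [mul_comm]
  have heq : ∫ x : ℝ, (x ^ 2 * rexp (-(2⁻¹:ℝ) * x ^ 2) - rexp (-(2⁻¹:ℝ) * x ^ 2)) = 0 := by
    rw [← h0]; congr 1; funext x; ring
  rw [hsub] at heq
  linarith [heq, hgauss.le, hgauss.ge]

lemma gauss_sq : ∫⁻ x : ℝ, ENNReal.ofReal (x ^ 2) ∂(gaussianReal 0 1) = 1 := by
  rw [gaussianReal_of_var_ne_zero 0 one_ne_zero,
    lintegral_withDensity_eq_lintegral_mul _ (measurable_gaussianPDF 0 1)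
      (by fun_prop : Measurable fun x : ℝ => ENNReal.ofReal (x ^ 2))]
  have hpdf : ∀ x : ℝ, gaussianPDFReal 0 1 x = (Real.sqrt (2 * π))⁻¹ * rexp (-(2⁻¹:ℝ) * x ^ 2) := by
    intro x
    simp only [gaussianPDFReal, NNReal.coe_one, mul_one, sub_zero]
    congr 1
    ring
  have hnn : ∀ x : ℝ, 0 ≤ gaussianPDFReal 0 1 x * x ^ 2 :=
    fun x => mul_nonneg (gaussianPDFReal_nonneg 0 1 x) (sq_nonneg x)
  have hint : Integrable (fun x : ℝ => gaussianPDFReal 0 1 x * x ^ 2) := by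
    refine (aux_integrable_sq.const_mul ((Real.sqrt (2 * π))⁻¹)).congr ?_
    filter_upwards [] with x
    rw [hpdf x]; ring
  have key : ∫⁻ x : ℝ, ENNReal.ofReal (gaussianPDFReal 0 1 x * x ^ 2) = 1 := by
    rw [← ofReal_integral_eq_lintegral_ofReal hint (Filter.Eventually.of_forall hnn)]
    have : ∫ x : ℝ, gaussianPDFReal 0 1 x * x ^ 2 = 1 := by
      have : ∫ x : ℝ, gaussianPDFReal 0 1 x * x ^ 2
          = (Real.sqrt (2 * π))⁻¹ * ∫ x : ℝ, x ^ 2 * rexp (-(2⁻¹:ℝ) * x ^ 2) := by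
        rw [← integral_const_mul]
        congr 1; funext x; rw [hpdf x]; ring
      rw [this, aux_second_moment, inv_mul_cancel₀]
      positivity
    rw [this, ENNReal.ofReal_one]
  rw [← key]
  congr 1; funext x
  simp only [Pi.mul_apply, gaussianPDF]
  rw [← ENNReal.ofReal_mul (gaussianPDFReal_nonneg 0 1 x)]

/-- The standard Gaussian measure on `EuclideanSpace ℝ (Fin p)`, i.e. the product over the `p`
coordinates of the real Gaussian measure with mean `0` and variance `1`. -/
noncomputable def stdGaussian (p : ℕ) : Measure (EuclideanSpace ℝ (Fin p)) :=
  Measure.map (MeasurableEquiv.toLp 2 (Fin p → ℝ))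
    (Measure.pi fun _ : Fin p => gaussianReal 0 1)

instance stdGaussian_prob (p : ℕ) : IsProbabilityMeasure (stdGaussian p) :=
  Measure.isProbabilityMeasure_map (MeasurableEquiv.toLp 2 (Fin p → ℝ)).measurable.aemeasurable

lemma my_map_eval_pi (p : ℕ) (i : Fin p) :
    Measure.map (fun x : Fin p → ℝ => x i) (Measure.pi fun _ : Fin p => gaussianReal 0 1)
      = gaussianReal 0 1 := by
  refine Measure.ext fun s hs => ?_
  rw [Measure.map_apply (measurable_pi_apply i) hs]
  have : (fun x : Fin p → ℝ => x i) ⁻¹' s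
      = Set.univ.pi (Function.update (fun _ : Fin p => (Set.univ : Set ℝ)) i s) :=
    Set.eval_preimage
  rw [this, Measure.pi_pi]
  rw [Finset.prod_eq_single i]
  · simp
  · intro j _ hj
    simp [Function.update_of_ne hj]
  · simp

lemma stdGaussian_norm_sq (p : ℕ) :
    ∫⁻ a, ENNReal.ofReal (‖a‖ ^ 2) ∂(stdGaussian p) = p := by
  rw [_root_.stdGaussian, lintegral_map ((measurable_norm).pow_const 2).ennreal_ofReal
    (MeasurableEquiv.toLp 2 (Fin p → ℝ)).measurable]
  have hnorm : ∀ x : Fin p → ℝ,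
      ‖(MeasurableEquiv.toLp 2 (Fin p → ℝ)) x‖ ^ 2 = ∑ i, (x i) ^ 2 := by
    intro x
    rw [EuclideanSpace.norm_eq, Real.sq_sqrt (by positivity)]
    congr 1; funext i
    rw [MeasurableEquiv.toLp_apply, PiLp.toLp_apply]
    rw [Real.norm_eq_abs, sq_abs]
  calc ∫⁻ x, ENNReal.ofReal (‖(MeasurableEquiv.toLp 2 (Fin p → ℝ)) x‖ ^ 2)
        ∂(Measure.pi fun _ : Fin p => gaussianReal 0 1)
      = ∫⁻ x, ∑ i, ENNReal.ofReal ((x i) ^ 2) ∂(Measure.pi fun _ : Fin p => gaussianReal 0 1) := by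
        congr 1; funext x
        rw [hnorm x, ENNReal.ofReal_sum_of_nonneg (fun i _ => sq_nonneg _)]
    _ = ∑ i : Fin p, ∫⁻ x, ENNReal.ofReal ((x i) ^ 2)
          ∂(Measure.pi fun _ : Fin p => gaussianReal 0 1) :=
        lintegral_finset_sum _ (fun i _ =>
          ((measurable_pi_apply i).pow_const 2).ennreal_ofReal)
    _ = ∑ _i : Fin p, (1 : ENNReal) := by
        refine Finset.sum_congr rfl fun i _ => ?_
        rw [← lintegral_map (by fun_prop : Measurable fun x : ℝ => ENNReal.ofReal (x ^ 2)) (measurable_pi_apply i), my_map_eval_pi, gauss_sq]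
    _ = p := by simp

lemma hnum1_aux : 6 * (Real.exp 1 - 1) ^ 2 ≤ (7 - Real.exp 1) ^ 2 := by
  have hE1' : (2.71828:ℝ) < Real.exp 1 := lt_trans (by norm_num) Real.exp_one_gt_d9
  have hE2' : Real.exp 1 < 2.71829 := lt_trans Real.exp_one_lt_d9 (by norm_num)
  nlinarith [hE1', hE2', mul_pos (sub_pos.2 hE1') (sub_pos.2 hE2')]

lemma hnum2_aux : 108 * (Real.exp 1 - 1) ≤ 11 * (7 - Real.exp 1) ^ 2 := by
  have hE1' : (2.71828:ℝ) < Real.exp 1 := lt_trans (by norm_num) Real.exp_one_gt_d9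
  have hE2' : Real.exp 1 < 2.71829 := lt_trans Real.exp_one_lt_d9 (by norm_num)
  nlinarith [hE1', hE2', mul_pos (sub_pos.2 hE1') (sub_pos.2 hE2')]

set_option maxHeartbeats 1000000 in
lemma scalar_key (L t c s X u v A Z : ℝ) (hL : 0 < L) (ht0 : 0 ≤ t)
    (hc0 : 0 ≤ c) (hs0 : 0 ≤ s) (hs2 : s ^ 2 = c)
    (hct : c ≤ (Real.exp 1 - 1) * t) (h12Lc : 12 * L * c ≤ Real.exp 1 - 1)
    (hX0 : 0 ≤ X) (hu0 : 0 ≤ u) (hv0 : 0 ≤ v) (hA0 : 0 ≤ A) (hZ0 : 0 ≤ Z)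
    (hmain : X ≤ L * (c * A + 2 * c * (X + u + v) + s * Z)) :
    X ^ 2 ≤ 18 * L ^ 2 * t ^ 2 * A ^ 2 + 11 * L ^ 2 * t * Z ^ 2
      + 144 * L ^ 2 * t ^ 2 * (u ^ 2 + v ^ 2) := by
  have hE2 : Real.exp 1 < 2.71829 := lt_trans Real.exp_one_lt_d9 (by norm_num)
  have hE1 : (2.71828:ℝ) < Real.exp 1 := lt_trans (by norm_num) Real.exp_one_gt_d9
  have h7 : 0 < 7 - Real.exp 1 := by linarith
  set Y : ℝ := L * c * A + 2 * L * c * (u + v) + L * s * Z with hY_def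
  have hYnn : 0 ≤ Y := by
    have n1 := mul_nonneg (mul_nonneg hL.le hc0) hA0
    have n2 := mul_nonneg (mul_nonneg (mul_nonneg (by norm_num : (0:ℝ) ≤ 2) hL.le) hc0)
      (by linarith : (0:ℝ) ≤ u + v)
    have n3 := mul_nonneg (mul_nonneg hL.le hs0) hZ0
    simp only [hY_def]
    linarith [n1, n2, n3]
  have hY : (7 - Real.exp 1) * X ≤ 6 * Y := by
    have hprod : 0 ≤ (Real.exp 1 - 1 - 12 * L * c) * X := mul_nonneg (by linarith) hX0
    simp only [hY_def]
    nlinarith [hmain, hprod]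
  have hsq : (7 - Real.exp 1) ^ 2 * X ^ 2 ≤ 36 * Y ^ 2 := by
    have h := mul_self_le_mul_self (mul_nonneg h7.le hX0) hY
    nlinarith [h]
  have hY3 : Y ^ 2 ≤ 3 * (L * c * A) ^ 2 + 3 * (2 * L * c * (u + v)) ^ 2 + 3 * (L * s * Z) ^ 2 := by
    nlinarith [sq_nonneg (L * c * A - 2 * L * c * (u + v)), sq_nonneg (L * c * A - L * s * Z),
      sq_nonneg (2 * L * c * (u + v) - L * s * Z)]
  have hc2 : c ^ 2 ≤ (Real.exp 1 - 1) ^ 2 * t ^ 2 := by nlinarith [hct, hc0]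
  have hnum1 := hnum1_aux
  have hnum2 := hnum2_aux
  have p1 : 108 * (L * c * A) ^ 2 ≤ (7 - Real.exp 1) ^ 2 * (18 * L ^ 2 * t ^ 2 * A ^ 2) := by
    have w1 := mul_le_mul_of_nonneg_left hc2 (by positivity : (0:ℝ) ≤ 108 * L ^ 2 * A ^ 2)
    have w2 := mul_le_mul_of_nonneg_left hnum1
      (by positivity : (0:ℝ) ≤ 3 * L ^ 2 * t ^ 2 * A ^ 2)
    nlinarith [w1, w2]
  have p2 : 108 * (L * s * Z) ^ 2 ≤ (7 - Real.exp 1) ^ 2 * (11 * L ^ 2 * t * Z ^ 2) := by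
    have w1 := mul_le_mul_of_nonneg_left hct (by positivity : (0:ℝ) ≤ 108 * L ^ 2 * Z ^ 2)
    have w2 := mul_le_mul_of_nonneg_left hnum2
      (mul_nonneg (mul_nonneg (sq_nonneg L) ht0) (sq_nonneg Z) : (0:ℝ) ≤ L ^ 2 * t * Z ^ 2)
    have hsz : (L * s * Z) ^ 2 = L ^ 2 * c * Z ^ 2 := by rw [← hs2]; ring
    nlinarith [w1, w2, hsz]
  have p3 : 108 * (2 * L * c * (u + v)) ^ 2
      ≤ (7 - Real.exp 1) ^ 2 * (144 * L ^ 2 * t ^ 2 * (u ^ 2 + v ^ 2)) := by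
    have huv2 : (u + v) ^ 2 ≤ 2 * (u ^ 2 + v ^ 2) := by nlinarith [sq_nonneg (u - v)]
    have w0 := mul_le_mul_of_nonneg_left huv2 (by positivity : (0:ℝ) ≤ 432 * L ^ 2 * c ^ 2)
    have w1 := mul_le_mul_of_nonneg_left hc2
      (by positivity : (0:ℝ) ≤ 864 * L ^ 2 * (u ^ 2 + v ^ 2))
    have w2 := mul_le_mul_of_nonneg_left hnum1
      (by positivity : (0:ℝ) ≤ 144 * L ^ 2 * t ^ 2 * (u ^ 2 + v ^ 2))
    nlinarith [w0, w1, w2]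
  have final : (7 - Real.exp 1) ^ 2 * X ^ 2
      ≤ (7 - Real.exp 1) ^ 2 * (18 * L ^ 2 * t ^ 2 * A ^ 2 + 11 * L ^ 2 * t * Z ^ 2
          + 144 * L ^ 2 * t ^ 2 * (u ^ 2 + v ^ 2)) := by
    nlinarith [hsq, hY3, p1, p2, p3]
  exact le_of_mul_le_mul_left final (pow_pos h7 2)

lemma key_pointwise {p : ℕ} (L : ℝ) (hL : 0 < L)
    (S : EuclideanSpace ℝ (Fin p) → EuclideanSpace ℝ (Fin p))
    (hS : ∀ a a' : EuclideanSpace ℝ (Fin p), ‖S a - S a'‖ ≤ L * ‖a - a'‖)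
    (t : ℝ) (ht0 : 0 ≤ t) (ht1 : t ≤ 1) (ht2 : t ≤ 1 / (12 * L))
    (b : EuclideanSpace ℝ (Fin p) → EuclideanSpace ℝ (Fin p))
    (z a₀ : EuclideanSpace ℝ (Fin p)) :
    ‖S (Real.exp t • a₀ + (2 * (Real.exp t - 1)) • S a₀ +
        Real.sqrt (Real.exp t - 1) • z) - S a₀‖ ^ 2 ≤
      18 * L ^ 2 * t ^ 2 * ‖a₀‖ ^ 2 + 11 * L ^ 2 * t * ‖z‖ ^ 2 +
        144 * L ^ 2 * t ^ 2 *
          (‖S (Real.exp t • a₀ + (2 * (Real.exp t - 1)) • S a₀ +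
              Real.sqrt (Real.exp t - 1) • z) -
            b (Real.exp t • a₀ + (2 * (Real.exp t - 1)) • S a₀ +
              Real.sqrt (Real.exp t - 1) • z)‖ ^ 2 +
           ‖b (Real.exp t • a₀ + (2 * (Real.exp t - 1)) • S a₀ +
              Real.sqrt (Real.exp t - 1) • z)‖ ^ 2) := by
  set c : ℝ := Real.exp t - 1 with hc_def
  set s : ℝ := Real.sqrt c with hs_def
  set w : EuclideanSpace ℝ (Fin p) := Real.exp t • a₀ + (2 * c) • S a₀ + s • z with hw_def
  set X : ℝ := ‖S w - S a₀‖ with hX_def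
  set u : ℝ := ‖S w - b w‖ with hu_def
  set v : ℝ := ‖b w‖ with hv_def
  set A : ℝ := ‖a₀‖ with hA_def
  set Z : ℝ := ‖z‖ with hZ_def
  have hc0 : 0 ≤ c := by
    have := Real.one_le_exp ht0; simp only [hc_def]; linarith
  have hs0 : 0 ≤ s := Real.sqrt_nonneg c
  have hs2 : s ^ 2 = c := Real.sq_sqrt hc0
  have hE1 : (2.71828 : ℝ) < Real.exp 1 := lt_trans (by norm_num) Real.exp_one_gt_d9
  have hE2 : Real.exp 1 < 2.71829 := lt_trans Real.exp_one_lt_d9 (by norm_num)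
  have hct : c ≤ (Real.exp 1 - 1) * t := by
    have hcv := convexOn_exp.2 (Set.mem_univ (0:ℝ)) (Set.mem_univ (1:ℝ))
      (by linarith : (0:ℝ) ≤ 1 - t) ht0 (by ring)
    simp only [smul_eq_mul, mul_zero, mul_one, zero_add, Real.exp_zero] at hcv
    simp only [hc_def]; linarith
  have hLt : t * (12 * L) ≤ 1 := (le_div_iff₀ (by positivity)).mp ht2
  have h12Lc : 12 * L * c ≤ Real.exp 1 - 1 := by
    have h1 := mul_le_mul_of_nonneg_left hct (by positivity : (0:ℝ) ≤ 12 * L)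
    nlinarith [h1, hE1, mul_le_mul_of_nonneg_left hLt (by linarith : (0:ℝ) ≤ Real.exp 1 - 1)]
  have hX0 : 0 ≤ X := norm_nonneg _
  have hu0 : 0 ≤ u := norm_nonneg _
  have hv0 : 0 ≤ v := norm_nonneg _
  have hA0 : 0 ≤ A := norm_nonneg _
  have hZ0 : 0 ≤ Z := norm_nonneg _
  have h1 : X ≤ L * ‖w - a₀‖ := hS w a₀
  have hwa : w - a₀ = c • a₀ + (2 * c) • S a₀ + s • z := by
    simp only [hw_def, hc_def]
    module
  have h2 : ‖w - a₀‖ ≤ c * A + 2 * c * ‖S a₀‖ + s * Z := by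
    rw [hwa]
    refine (norm_add₃_le).trans ?_
    rw [norm_smul, norm_smul, norm_smul]
    simp only [Real.norm_eq_abs]
    rw [abs_of_nonneg hc0, abs_of_nonneg (by linarith : (0:ℝ) ≤ 2 * c), abs_of_nonneg hs0]
  have h3 : ‖S a₀‖ ≤ X + u + v := by
    have heq : S a₀ = (S a₀ - S w) + (S w - b w) + b w := by abel
    rw [heq]
    refine (norm_add₃_le).trans ?_
    rw [norm_sub_rev (S a₀) (S w)]
  have hmain : X ≤ L * (c * A + 2 * c * (X + u + v) + s * Z) := by
    refine h1.trans ?_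
    refine (mul_le_mul_of_nonneg_left h2 hL.le).trans ?_
    refine mul_le_mul_of_nonneg_left ?_ hL.le
    nlinarith [h3, hc0]
  exact scalar_key L t c s X u v A Z hL ht0 hc0 hs0 hs2 hct h12Lc hX0 hu0 hv0 hA0 hZ0 hmain

theorem stmt3 (p : ℕ) (L : ℝ) (hL : 0 < L)
    (S : EuclideanSpace ℝ (Fin p) → EuclideanSpace ℝ (Fin p))
    (hS : ∀ a a' : EuclideanSpace ℝ (Fin p), ‖S a - S a'‖ ≤ L * ‖a - a'‖)
    (t : ℝ) (ht0 : 0 ≤ t) (ht1 : t ≤ 1) (ht2 : t ≤ 1 / (12 * L))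
    (b : EuclideanSpace ℝ (Fin p) → EuclideanSpace ℝ (Fin p)) (hb : Measurable b) :
    (∫⁻ z, ∫⁻ a₀, ENNReal.ofReal
        (‖S (Real.exp t • a₀ + (2 * (Real.exp t - 1)) • S a₀ +
            Real.sqrt (Real.exp t - 1) • z) - S a₀‖ ^ 2)
        ∂(stdGaussian p) ∂(stdGaussian p)) ≤
      ENNReal.ofReal (36 * p * L ^ 2 * t * (1 + t)) +
        ENNReal.ofReal (144 * L ^ 2 * t ^ 2) *
          ∫⁻ z, ∫⁻ a₀, ENNReal.ofReal
            (‖S (Real.exp t • a₀ + (2 * (Real.exp t - 1)) • S a₀ +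
                Real.sqrt (Real.exp t - 1) • z) -
              b (Real.exp t • a₀ + (2 * (Real.exp t - 1)) • S a₀ +
                Real.sqrt (Real.exp t - 1) • z)‖ ^ 2 +
             ‖b (Real.exp t • a₀ + (2 * (Real.exp t - 1)) • S a₀ +
                Real.sqrt (Real.exp t - 1) • z)‖ ^ 2)
            ∂(stdGaussian p) ∂(stdGaussian p) := by
  have hScont : Continuous S := by
    have hlip : LipschitzWith (Real.toNNReal L) S := by
      refine LipschitzWith.of_dist_le_mul fun x y => ?_
      rw [dist_eq_norm, dist_eq_norm, Real.coe_toNNReal L hL.le]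
      exact hS x y
    exact hlip.continuous
  have hSm : Measurable S := hScont.measurable
  have hwm : ∀ z : EuclideanSpace ℝ (Fin p), Measurable fun a₀ : EuclideanSpace ℝ (Fin p) =>
      Real.exp t • a₀ + (2 * (Real.exp t - 1)) • S a₀ + Real.sqrt (Real.exp t - 1) • z :=
    fun z => ((measurable_id.const_smul (Real.exp t)).add
      (hSm.const_smul (2 * (Real.exp t - 1)))).add measurable_const
  have hk1nn : (0:ℝ) ≤ 18 * L ^ 2 * t ^ 2 := by positivity
  have hk2nn : (0:ℝ) ≤ 11 * L ^ 2 * t := mul_nonneg (by positivity) ht0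
  have hk3nn : (0:ℝ) ≤ 144 * L ^ 2 * t ^ 2 := by positivity
  set μ := stdGaussian p
  -- inner bound
  have hinner : ∀ z : EuclideanSpace ℝ (Fin p),
      (∫⁻ a₀, ENNReal.ofReal
        (‖S (Real.exp t • a₀ + (2 * (Real.exp t - 1)) • S a₀ +
            Real.sqrt (Real.exp t - 1) • z) - S a₀‖ ^ 2) ∂μ) ≤
      ENNReal.ofReal (18 * L ^ 2 * t ^ 2) * p + ENNReal.ofReal (11 * L ^ 2 * t * ‖z‖ ^ 2)
        + ENNReal.ofReal (144 * L ^ 2 * t ^ 2) *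
          ∫⁻ a₀, ENNReal.ofReal
            (‖S (Real.exp t • a₀ + (2 * (Real.exp t - 1)) • S a₀ +
                Real.sqrt (Real.exp t - 1) • z) -
              b (Real.exp t • a₀ + (2 * (Real.exp t - 1)) • S a₀ +
                Real.sqrt (Real.exp t - 1) • z)‖ ^ 2 +
             ‖b (Real.exp t • a₀ + (2 * (Real.exp t - 1)) • S a₀ +
                Real.sqrt (Real.exp t - 1) • z)‖ ^ 2) ∂μ := by
    intro z
    have step1 : (∫⁻ a₀, ENNReal.ofReal
        (‖S (Real.exp t • a₀ + (2 * (Real.exp t - 1)) • S a₀ +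
            Real.sqrt (Real.exp t - 1) • z) - S a₀‖ ^ 2) ∂μ) ≤
        ∫⁻ a₀, (ENNReal.ofReal (18 * L ^ 2 * t ^ 2) * ENNReal.ofReal (‖a₀‖ ^ 2)
          + ENNReal.ofReal (11 * L ^ 2 * t * ‖z‖ ^ 2)
          + ENNReal.ofReal (144 * L ^ 2 * t ^ 2) * ENNReal.ofReal
            (‖S (Real.exp t • a₀ + (2 * (Real.exp t - 1)) • S a₀ +
                Real.sqrt (Real.exp t - 1) • z) -
              b (Real.exp t • a₀ + (2 * (Real.exp t - 1)) • S a₀ +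
                Real.sqrt (Real.exp t - 1) • z)‖ ^ 2 +
             ‖b (Real.exp t • a₀ + (2 * (Real.exp t - 1)) • S a₀ +
                Real.sqrt (Real.exp t - 1) • z)‖ ^ 2)) ∂μ := by
      refine lintegral_mono fun a₀ => ?_
      have key := key_pointwise L hL S hS t ht0 ht1 ht2 b z a₀
      refine (ENNReal.ofReal_le_ofReal key).trans (le_of_eq ?_)
      rw [ENNReal.ofReal_add (by positivity) (mul_nonneg hk3nn (by positivity)),
        ENNReal.ofReal_add (by positivity) (mul_nonneg hk2nn (sq_nonneg _)),
        ENNReal.ofReal_mul hk1nn, ENNReal.ofReal_mul hk3nn, mul_assoc]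
    refine step1.trans (le_of_eq ?_)
    have hm1 : Measurable fun a₀ : EuclideanSpace ℝ (Fin p) =>
        ENNReal.ofReal (18 * L ^ 2 * t ^ 2) * ENNReal.ofReal (‖a₀‖ ^ 2) :=
      (((measurable_norm).pow_const 2).ennreal_ofReal).const_mul _
    have hm12 : Measurable fun a₀ : EuclideanSpace ℝ (Fin p) =>
        ENNReal.ofReal (18 * L ^ 2 * t ^ 2) * ENNReal.ofReal (‖a₀‖ ^ 2)
          + ENNReal.ofReal (11 * L ^ 2 * t * ‖z‖ ^ 2) := hm1.add measurable_const
    rw [lintegral_add_left hm12, lintegral_add_left hm1,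
      lintegral_const_mul' _ _ ENNReal.ofReal_ne_top, stdGaussian_norm_sq p,
      lintegral_const, measure_univ, mul_one,
      lintegral_const_mul' _ _ ENNReal.ofReal_ne_top]
  refine (lintegral_mono hinner).trans ?_
  have hm2 : Measurable fun z : EuclideanSpace ℝ (Fin p) =>
      ENNReal.ofReal (18 * L ^ 2 * t ^ 2) * (p : ENNReal)
        + ENNReal.ofReal (11 * L ^ 2 * t * ‖z‖ ^ 2) := by
    refine (measurable_const (a := ENNReal.ofReal (18 * L ^ 2 * t ^ 2) * (p : ENNReal))).add ?_
    exact (((measurable_norm).pow_const 2).const_mul (11 * L ^ 2 * t)).ennreal_ofReal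
  rw [lintegral_add_left hm2, lintegral_add_left measurable_const,
    lintegral_const, measure_univ, mul_one,
    lintegral_const_mul' _ _ ENNReal.ofReal_ne_top]
  have hz2 : ∫⁻ z, ENNReal.ofReal (11 * L ^ 2 * t * ‖z‖ ^ 2) ∂μ
      = ENNReal.ofReal (11 * L ^ 2 * t) * p := by
    calc ∫⁻ z, ENNReal.ofReal (11 * L ^ 2 * t * ‖z‖ ^ 2) ∂μ
        = ∫⁻ z, ENNReal.ofReal (11 * L ^ 2 * t) * ENNReal.ofReal (‖z‖ ^ 2) ∂μ := by
          congr 1; funext z; rw [ENNReal.ofReal_mul hk2nn]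
      _ = ENNReal.ofReal (11 * L ^ 2 * t) * p := by
          rw [lintegral_const_mul' _ _ ENNReal.ofReal_ne_top, stdGaussian_norm_sq p]
  rw [hz2]
  refine add_le_add ?_ le_rfl
  rw [← ENNReal.ofReal_natCast p, ← ENNReal.ofReal_mul hk1nn, ← ENNReal.ofReal_mul hk2nn,
    ← ENNReal.ofReal_add (mul_nonneg hk1nn (Nat.cast_nonneg p))
      (mul_nonneg hk2nn (Nat.cast_nonneg p))]
  refine ENNReal.ofReal_le_ofReal ?_
  have hp1 : (0:ℝ) ≤ (p:ℝ) * L ^ 2 * t :=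
    mul_nonneg (mul_nonneg (Nat.cast_nonneg p) (sq_nonneg L)) ht0
  have hp2 : (0:ℝ) ≤ (p:ℝ) * L ^ 2 * t ^ 2 :=
    mul_nonneg (mul_nonneg (Nat.cast_nonneg p) (sq_nonneg L)) (sq_nonneg t)
  nlinarith [hp1, hp2]
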